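/- Under the Bounded-Coefficient Scheme Hypotheses, assume additionally that all the maps T_1, …, T_m and I_1, …, I_m are continuous. Then for each i = 1, …, m, lim_{n→∞} ‖x_n − I_iⁿ x_n‖ = 0. -/

import Mathlib

/-!
Fix a common fixed point `p`. Since the gauges grow at most linearly, every iterate `Tᵢⁿ`, `Iᵢⁿ`
moves points away from `p` by at most `‖Tⁿ z - p‖ ≤ (1 + βₙ) ‖z - p‖ + γₙ` with summable `β`, `γ`.
Hence `dₙ = ‖xₙ - p‖` satisfies a quasi-Fejér inequality and converges to some `L`, and because
`xₙ₊₁` puts weight at most `α^* < 1` on `xₙ`, also `‖yₙ - p‖ → L`. Now `yₙ - p` is a convex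
combination, with weights bounded away from `0` and `1`, of `xₙ - p` and the `Iᵢⁿ xₙ - p`, all of
norm asymptotically at most `L`. By Schu's lemma (uniform convexity) each of these points gets
close to `yₙ`, so `‖xₙ - Iᵢⁿ xₙ‖ → 0`.
-/

open Filter Topology Finset Set

theorem Summable.mul_summable_of_nonneg {f g : ℕ → ℝ} (hf : Summable f) (hg : Summable g)
    (hf0 : ∀ n, 0 ≤ f n) (hg0 : ∀ n, 0 ≤ g n) : Summable fun n => f n * g n :=
  (hg.mul_left (∑' k, f k)).of_nonneg_of_le (fun n => mul_nonneg (hf0 n) (hg0 n))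
    fun n => mul_le_mul_of_nonneg_right (hf.le_tsum n fun k _ => hf0 k) (hg0 n)

theorem Summable.one_add_mul_one_add_sub_one {f g : ℕ → ℝ} (hf : Summable f) (hg : Summable g)
    (hf0 : ∀ n, 0 ≤ f n) (hg0 : ∀ n, 0 ≤ g n) :
    Summable fun n => (1 + f n) * (1 + g n) - 1 := by
  simpa only [show ∀ n, (1 + f n) * (1 + g n) - 1 = f n + g n + f n * g n from fun n => by ring]
    using (hf.add hg).add (hf.mul_summable_of_nonneg hg hf0 hg0)

theorem exists_tendsto_of_le_add_summable {d u : ℕ → ℝ} (hd : BddBelow (range d))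
    (hu : Summable u) (h : ∀ n, d (n + 1) ≤ d n + u n) : ∃ L, Tendsto d atTop (𝓝 L) := by
  have hpartial := hu.hasSum.tendsto_sum_nat
  set e : ℕ → ℝ := fun n => d n - ∑ k ∈ range n, u k
  have he : Antitone e := antitone_nat_of_succ_le fun n => by
    simp only [e, sum_range_succ]; linarith [h n]
  have he_bdd : BddBelow (range e) := by
    obtain ⟨D, hD⟩ := hd
    obtain ⟨S, hS⟩ := hpartial.bddAbove_range
    refine ⟨D - S, ?_⟩
    rintro _ ⟨n, rfl⟩
    linarith [hD (mem_range_self n), hS (mem_range_self n)]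
  refine ⟨_, (tendsto_atTop_ciInf he he_bdd).add hpartial |>.congr fun n => ?_⟩
  simp [e]

theorem le_mul_exp_of_le_one_add_mul_add {d s t : ℕ → ℝ} (hd : 0 ≤ d 0) (hs : ∀ n, 0 ≤ s n)
    (ht : ∀ n, 0 ≤ t n) (h : ∀ n, d (n + 1) ≤ (1 + s n) * d n + t n) (n : ℕ) :
    d n ≤ (d 0 + ∑ k ∈ range n, t k) * Real.exp (∑ k ∈ range n, s k) := by
  induction n with
  | zero => simp
  | succ n ih =>
    have hT : 0 ≤ d 0 + ∑ k ∈ range n, t k := add_nonneg hd (sum_nonneg fun k _ => ht k)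
    have hS : 1 ≤ Real.exp (∑ k ∈ range (n + 1), s k) :=
      Real.one_le_exp (sum_nonneg fun k _ => hs k)
    calc d (n + 1) ≤ (1 + s n) * d n + t n := h n
      _ ≤ Real.exp (s n) * ((d 0 + ∑ k ∈ range n, t k) * Real.exp (∑ k ∈ range n, s k))
          + t n * Real.exp (∑ k ∈ range (n + 1), s k) := by
        have hX := mul_nonneg hT (Real.exp_pos (∑ k ∈ range n, s k)).le
        refine add_le_add ((mul_le_mul_of_nonneg_left ih (by linarith [hs n])).trans
          (mul_le_mul_of_nonneg_right ?_ hX)) (le_mul_of_one_le_right (ht n) hS)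
        linarith [Real.add_one_le_exp (s n)]
      _ = _ := by rw [sum_range_succ, sum_range_succ, Real.exp_add]; ring

theorem exists_tendsto_of_le_one_add_mul_add {d s t : ℕ → ℝ} (hd : ∀ n, 0 ≤ d n)
    (hs : ∀ n, 0 ≤ s n) (ht : ∀ n, 0 ≤ t n) (hs' : Summable s) (ht' : Summable t)
    (h : ∀ n, d (n + 1) ≤ (1 + s n) * d n + t n) : ∃ L, Tendsto d atTop (𝓝 L) := by
  set D := (d 0 + ∑' k, t k) * Real.exp (∑' k, s k)
  have hD : ∀ n, d n ≤ D := fun n => (le_mul_exp_of_le_one_add_mul_add (hd 0) hs ht h n).trans <| by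
    unfold D
    gcongr
    · exact add_nonneg (hd 0) (tsum_nonneg ht)
    · exact ht'.sum_le_tsum _ fun k _ => ht k
    · exact hs'.sum_le_tsum _ fun k _ => hs k
  refine exists_tendsto_of_le_add_summable ⟨0, ?_⟩ ((hs'.mul_right D).add ht') fun n => ?_
  · rintro _ ⟨n, rfl⟩; exact hd n
  · nlinarith [h n, mul_le_mul_of_nonneg_left (hD n) (hs n)]

theorem tendsto_of_le_convex_step {d r R a c e : ℕ → ℝ} {L ahi : ℝ} (hahi : ahi < 1)
    (ha : ∀ n, a n ≤ ahi) (hc : ∀ n, 0 < c n) (hd : Tendsto d atTop (𝓝 L))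
    (hR : Tendsto R atTop (𝓝 L)) (hc1 : Tendsto c atTop (𝓝 1)) (he : Tendsto e atTop (𝓝 0))
    (hr : ∀ n, r n ≤ R n) (h : ∀ n, d (n + 1) ≤ a n * d n + (1 - a n) * (c n * r n + e n)) :
    Tendsto r atTop (𝓝 L) := by
  have hahi' : 0 < 1 - ahi := by linarith
  -- `(1 - a n) * X ≥ d (n + 1) - d n` with `1 - a n ≥ 1 - ahi` bounds `X := c r + e - d` below
  have hlower : ∀ n, d n - e n - |d (n + 1) - d n| / (1 - ahi) ≤ c n * r n := by
    intro n
    have key : d (n + 1) - d n ≤ (1 - a n) * (c n * r n + e n - d n) := by linarith [h n]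
    suffices -|d (n + 1) - d n| ≤ (c n * r n + e n - d n) * (1 - ahi) by
      rw [← div_le_iff₀ hahi', neg_div] at this; linarith
    rcases le_or_gt 0 (c n * r n + e n - d n) with hX | hX
    · nlinarith [abs_nonneg (d (n + 1) - d n)]
    · nlinarith [neg_abs_le (d (n + 1) - d n), ha n]
  have hcr : Tendsto (fun n => c n * r n) atTop (𝓝 L) := by
    refine tendsto_of_tendsto_of_tendsto_of_le_of_le ?_ (by simpa using hc1.mul hR) hlower
      fun n => mul_le_mul_of_nonneg_left (hr n) (hc n).le
    have hΔ := ((hd.comp (tendsto_add_atTop_nat 1)).sub hd).abs.div_const (1 - ahi)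
    simpa using (hd.sub he).sub hΔ
  have := hcr.div hc1 one_ne_zero
  rw [div_one] at this
  exact this.congr fun n => mul_div_cancel_left₀ _ (hc n).ne'

theorem exists_tendsto_of_le_convex_step {d r a β γ : ℕ → ℝ} {ahi : ℝ} (hahi : ahi < 1)
    (ha0 : ∀ n, 0 ≤ a n) (ha : ∀ n, a n ≤ ahi) (hd : ∀ n, 0 ≤ d n) (hβ0 : ∀ n, 0 ≤ β n)
    (hγ0 : ∀ n, 0 ≤ γ n) (hβ : Summable β) (hγ : Summable γ)
    (hr : ∀ n, r n ≤ (1 + β n) * d n + γ n)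
    (h : ∀ n, d (n + 1) ≤ a n * d n + (1 - a n) * ((1 + β n) * r n + γ n)) :
    ∃ L, Tendsto d atTop (𝓝 L) ∧ Tendsto r atTop (𝓝 L) := by
  have hrec : ∀ n, d (n + 1) ≤ (1 + ((1 + β n) * (1 + β n) - 1)) * d n
      + (β n * γ n + 2 * γ n) := fun n => by
    have hW : (1 + β n) * r n + γ n ≤ (1 + β n) * ((1 + β n) * d n + γ n) + γ n := by
      gcongr
      · linarith [hβ0 n]
      · exact hr n
    nlinarith [h n, ha n, ha0 n, hβ0 n, hγ0 n, hd n, mul_nonneg (hβ0 n) (hd n),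
      mul_nonneg (hβ0 n) (hγ0 n), mul_nonneg (mul_nonneg (hβ0 n) (hβ0 n)) (hd n)]
  obtain ⟨L, hL⟩ := exists_tendsto_of_le_one_add_mul_add hd
    (fun n => by nlinarith [hβ0 n]) (fun n => by nlinarith [hβ0 n, hγ0 n])
    (hβ.one_add_mul_one_add_sub_one hβ hβ0 hβ0)
    ((hβ.mul_summable_of_nonneg hγ hβ0 hγ0).add (hγ.mul_left 2)) hrec
  have hβ1 : Tendsto (fun n => 1 + β n) atTop (𝓝 1) := by
    simpa using hβ.tendsto_atTop_zero.const_add 1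
  refine ⟨L, hL, tendsto_of_le_convex_step hahi ha (fun n => by linarith [hβ0 n]) hL ?_ hβ1
    hγ.tendsto_atTop_zero hr h⟩
  simpa using (hβ1.mul hL).add hγ.tendsto_atTop_zero

theorem norm_sum_smul_le {ι E : Type*} [SeminormedAddCommGroup E] [NormedSpace ℝ E]
    {s : Finset ι} {w : ι → ℝ} {z : ι → E} {R : ℝ} (hw : ∀ k ∈ s, 0 ≤ w k)
    (hz : ∀ k ∈ s, ‖z k‖ ≤ R) : ‖∑ k ∈ s, w k • z k‖ ≤ (∑ k ∈ s, w k) * R := by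
  rw [sum_mul]
  refine (norm_sum_le _ _).trans (sum_le_sum fun k hk => ?_)
  rw [norm_smul_of_nonneg (hw k hk)]
  exact mul_le_mul_of_nonneg_left (hz k hk) (hw k hk)

theorem sum_smul_sub_eq_sum_smul_sub {ι E : Type*} [AddCommGroup E] [Module ℝ E] {s : Finset ι}
    {w : ι → ℝ} (hw : ∑ k ∈ s, w k = 1) (z : ι → E) (p : E) :
    ∑ k ∈ s, w k • z k - p = ∑ k ∈ s, w k • (z k - p) := by
  simp only [smul_sub, sum_sub_distrib, ← sum_smul, hw, one_smul]

section UniformConvex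

variable {E : Type*} [NormedAddCommGroup E] [NormedSpace ℝ E] [UniformConvexSpace E]

theorem exists_forall_closedBall_norm_add_le_mul_two_sub {ε ρ : ℝ} (hε : 0 < ε) (hρ : 0 < ρ) :
    ∃ δ, 0 < δ ∧ ∀ r ≤ ρ, ∀ ⦃u v : E⦄, ‖u‖ ≤ r → ‖v‖ ≤ r → ε ≤ ‖u - v‖ →
      ‖u + v‖ ≤ r * (2 - δ) := by
  obtain ⟨δ, hδ, h⟩ := exists_forall_closed_ball_dist_add_le_two_sub E (div_pos hε hρ)
  refine ⟨δ, hδ, fun r hrρ u v hu hv huv => ?_⟩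
  have hr : 0 < r := by linarith [norm_sub_le u v]
  have hscale : ∀ w : E, ‖r⁻¹ • w‖ = ‖w‖ / r := fun w => by
    rw [norm_smul_of_nonneg (inv_nonneg.2 hr.le), inv_mul_eq_div]
  have := @h (r⁻¹ • u) (by rw [hscale, div_le_one hr]; exact hu) (r⁻¹ • v)
    (by rw [hscale, div_le_one hr]; exact hv)
    (by rw [← smul_sub, hscale, le_div_iff₀ hr]
        exact (mul_le_mul_of_nonneg_left hrρ (div_pos hε hρ).le).trans
          (by rw [div_mul_cancel₀ _ hρ.ne']; exact huv))
  rw [← smul_add, hscale, div_le_iff₀ hr] at this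
  linarith

theorem exists_forall_closedBall_norm_smul_add_smul_le {ε c ρ : ℝ} (hε : 0 < ε) (hc : 0 < c)
    (hρ : 0 < ρ) :
    ∃ δ, 0 < δ ∧ ∀ r ≤ ρ, ∀ ⦃u v : E⦄, ‖u‖ ≤ r → ‖v‖ ≤ r → ε ≤ ‖u - v‖ →
      ∀ t ∈ Icc c (1 - c), ‖t • u + (1 - t) • v‖ ≤ r * (1 - c * δ) := by
  obtain ⟨δ, hδ, h⟩ := exists_forall_closedBall_norm_add_le_mul_two_sub (E := E) hε hρ
  refine ⟨δ, hδ, ?_⟩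
  have key : ∀ r ≤ ρ, ∀ ⦃u v : E⦄, ‖u‖ ≤ r → ‖v‖ ≤ r → ε ≤ ‖u - v‖ →
      ∀ t, c ≤ t → t ≤ 1 / 2 → ‖t • u + (1 - t) • v‖ ≤ r * (1 - c * δ) := by
    intro r hrρ u v hu hv huv t hct ht
    have hmid := h r hrρ hu hv huv
    have hr : 0 ≤ r := (norm_nonneg v).trans hv
    calc ‖t • u + (1 - t) • v‖ = ‖t • (u + v) + (1 - 2 * t) • v‖ := by congr 1; module
      _ ≤ t * ‖u + v‖ + (1 - 2 * t) * ‖v‖ := by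
        refine (norm_add_le _ _).trans_eq ?_
        rw [norm_smul_of_nonneg (by linarith), norm_smul_of_nonneg (by linarith)]
      _ ≤ t * (r * (2 - δ)) + (1 - 2 * t) * r := by gcongr <;> linarith
      _ ≤ r * (1 - c * δ) := by nlinarith [mul_nonneg hr hδ.le]
  rintro r hrρ u v hu hv huv t ⟨hct, htc⟩
  rcases le_or_gt t (1 / 2) with ht | ht
  · exact key r hrρ hu hv huv t hct ht
  · have := key r hrρ hv hu (by rwa [norm_sub_rev]) (1 - t) (by linarith) (by linarith)
    rwa [sub_sub_cancel, add_comm] at this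

theorem tendsto_norm_sub_of_tendsto_norm_smul_add_smul {t R : ℕ → ℝ} {lo hi L : ℝ}
    (hlo : 0 < lo) (hhi : hi < 1) (ht : ∀ n, t n ∈ Icc lo hi) {u v : ℕ → E}
    (hR : Tendsto R atTop (𝓝 L)) (hu : ∀ n, ‖u n‖ ≤ R n) (hv : ∀ n, ‖v n‖ ≤ R n)
    (huv : Tendsto (fun n => ‖t n • u n + (1 - t n) • v n‖) atTop (𝓝 L)) :
    Tendsto (fun n => ‖u n - v n‖) atTop (𝓝 0) := by
  have hL : 0 ≤ L := ge_of_tendsto' huv fun n => norm_nonneg _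
  rcases hL.eq_or_lt with rfl | hL
  · refine squeeze_zero (fun n => norm_nonneg _) (fun n => (norm_sub_le _ _).trans
      (add_le_add (hu n) (hv n))) ?_
    simpa using hR.add hR
  refine tendsto_order.2 ⟨fun b hb => .of_forall fun n => hb.trans_le (norm_nonneg _),
    fun ε hε => ?_⟩
  set c := min lo (1 - hi)
  have hc : 0 < c := lt_min hlo (by linarith)
  obtain ⟨δ, hδ, h⟩ := exists_forall_closedBall_norm_smul_add_smul_le (E := E) hε hc
    (by linarith : 0 < L + 1)
  set η := min 1 (L * (c * δ) / 2)
  have hη : 0 < η := lt_min one_pos (by positivity)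
  have hηle : η ≤ L * (c * δ) / 2 := min_le_right _ _
  filter_upwards [hR.eventually (eventually_le_nhds (lt_add_of_pos_right L hη)),
    huv.eventually (eventually_gt_nhds (by nlinarith [mul_pos hc hδ] :
      L - L * (c * δ) / 2 < L))] with n hRn hn
  by_contra! hsep
  have hct : t n ∈ Icc c (1 - c) :=
    ⟨(min_le_left _ _).trans (ht n).1, by linarith [(ht n).2, min_le_right lo (1 - hi)]⟩
  have := h (L + η) (by linarith [min_le_left 1 (L * (c * δ) / 2)]) ((hu n).trans hRn)
    ((hv n).trans hRn) hsep (t n) hct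
  nlinarith [mul_pos hη (mul_pos hc hδ)]

theorem tendsto_norm_sum_smul_sub {ι : Type*} [Fintype ι] {w : ι → ℕ → ℝ} {lo hi L : ℝ}
    (hlo : 0 < lo) (hhi : hi < 1) (hw : ∀ j n, w j n ∈ Icc lo hi)
    (hsum : ∀ n, ∑ j, w j n = 1) {z : ι → ℕ → E} {p : E} {R : ℕ → ℝ}
    (hR : Tendsto R atTop (𝓝 L)) (hz : ∀ j n, ‖z j n - p‖ ≤ R n)
    (hlim : Tendsto (fun n => ‖∑ j, w j n • z j n - p‖) atTop (𝓝 L)) (j : ι) :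
    Tendsto (fun n => ‖∑ k, w k n • z k n - z j n‖) atTop (𝓝 0) := by
  classical
  have hw0 : ∀ k n, 0 ≤ w k n := fun k n => hlo.le.trans (hw k n).1
  have hwj : ∀ n, 0 < 1 - w j n := fun n => by linarith [(hw j n).2]
  have hrest : ∀ n, ∑ k ∈ univ.erase j, w k n = 1 - w j n := fun n => by
    rw [← hsum n, ← add_sum_erase _ _ (mem_univ j), add_sub_cancel_left]
  -- the other points, merged into one point of the ball
  set v : ℕ → E := fun n => (1 - w j n)⁻¹ • ∑ k ∈ univ.erase j, w k n • (z k n - p)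
  have hv : ∀ n, ‖v n‖ ≤ R n := fun n => by
    rw [norm_smul_of_nonneg (inv_nonneg.2 (hwj n).le), inv_mul_le_iff₀ (hwj n), ← hrest n]
    exact norm_sum_smul_le (fun k _ => hw0 k n) fun k _ => hz k n
  have hsplit : ∀ n, ∑ k, w k n • z k n - p = w j n • (z j n - p) + (1 - w j n) • v n :=
    fun n => by
      rw [sum_smul_sub_eq_sum_smul_sub (hsum n), ← add_sum_erase _ _ (mem_univ j),
        smul_inv_smul₀ (hwj n).ne']
  have hschu := tendsto_norm_sub_of_tendsto_norm_smul_add_smul hlo hhi (hw j) hR (hz j) hv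
    (by simpa only [hsplit] using hlim)
  refine squeeze_zero (fun n => norm_nonneg _) (fun n => ?_) hschu
  have : ∑ k, w k n • z k n - z j n = (1 - w j n) • (v n - (z j n - p)) := by
    rw [← sub_sub_sub_cancel_right _ _ p, hsplit n]; module
  rw [this, norm_smul_of_nonneg (hwj n).le, norm_sub_rev]
  exact mul_le_of_le_one_left (norm_nonneg _) (by linarith [hw0 j n])

end UniformConvex

section IterateGrowth

variable {X : Type*} [SeminormedAddCommGroup X]

def HasSummableIterateGrowth (K : Set X) (f : X → X) (p : X) : Prop :=
  ∃ β γ : ℕ → ℝ, (∀ n, 0 ≤ β n) ∧ (∀ n, 0 ≤ γ n) ∧ Summable β ∧ Summable γ ∧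
    ∀ n, ∀ z ∈ K, ‖f^[n] z - p‖ ≤ (1 + β n) * ‖z - p‖ + γ n

theorem hasSummableIterateGrowth_id (K : Set X) (p : X) : HasSummableIterateGrowth K id p :=
  ⟨0, 0, fun _ => le_rfl, fun _ => le_rfl, summable_zero, summable_zero, fun n z _ => by simp⟩

theorem HasSummableIterateGrowth.of_norm_le {K : Set X} {f g : X → X} {p : X}
    (hg : HasSummableIterateGrowth K g p) {β γ : ℕ → ℝ} (hβ0 : ∀ n, 0 ≤ β n)
    (hγ0 : ∀ n, 0 ≤ γ n) (hβ : Summable β) (hγ : Summable γ)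
    (hf : ∀ n, ∀ z ∈ K, ‖f^[n] z - p‖ ≤ (1 + β n) * ‖g^[n] z - p‖ + γ n) :
    HasSummableIterateGrowth K f p := by
  obtain ⟨β', γ', hβ0', hγ0', hβ', hγ', hg⟩ := hg
  refine ⟨fun n => (1 + β n) * (1 + β' n) - 1, fun n => β n * γ' n + γ' n + γ n,
    fun n => by nlinarith [hβ0 n, hβ0' n], fun n => by nlinarith [hβ0 n, hγ0' n, hγ0 n],
    hβ.one_add_mul_one_add_sub_one hβ' hβ0 hβ0',
    ((hβ.mul_summable_of_nonneg hγ' hβ0 hγ0').add hγ').add hγ, fun n z hz => ?_⟩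
  calc ‖f^[n] z - p‖ ≤ (1 + β n) * ‖g^[n] z - p‖ + γ n := hf n z hz
    _ ≤ (1 + β n) * ((1 + β' n) * ‖z - p‖ + γ' n) + γ n := by
      gcongr
      · linarith [hβ0 n]
      · exact hg n z hz
    _ = _ := by ring

theorem le_add_mul_of_monotoneOn {φ : ℝ → ℝ} {M k : ℝ} (hφ : MonotoneOn φ (Ici 0)) (hM : 0 ≤ M)
    (hk : 0 ≤ k) (hφM : 0 ≤ φ M) (hφk : ∀ ξ, M ≤ ξ → φ ξ ≤ k * ξ) {ξ : ℝ} (hξ : 0 ≤ ξ) :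
    φ ξ ≤ φ M + k * ξ := by
  rcases le_total ξ M with h | h
  · linarith [hφ hξ hM h, mul_nonneg hk hξ]
  · linarith [hφk ξ h]

/-- With `g = id`, `hf` is total asymptotic nonexpansiveness; with `g = I`, it is total asymptotic
`I`-nonexpansiveness. -/
theorem HasSummableIterateGrowth.of_total {K : Set X} {f g : X → X} {p : X}
    (hg : HasSummableIterateGrowth K g p) {μ ν : ℕ → ℝ} {φ : ℝ → ℝ} {M k : ℝ}
    (hf : ∀ n, 1 ≤ n → ∀ x ∈ K, ∀ y ∈ K,
      ‖f^[n] x - f^[n] y‖ ≤ ‖g^[n] x - g^[n] y‖ + μ n * φ ‖g^[n] x - g^[n] y‖ + ν n)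
    (hp : p ∈ K) (hfp : f p = p) (hgp : g p = p) (hμ0 : ∀ n, 0 ≤ μ n) (hν0 : ∀ n, 0 ≤ ν n)
    (hμ : Summable μ) (hν : Summable ν) (hφ : MonotoneOn φ (Ici 0)) (hM : 0 ≤ M) (hk : 0 ≤ k)
    (hφM : 0 ≤ φ M) (hφk : ∀ ξ, M ≤ ξ → φ ξ ≤ k * ξ) : HasSummableIterateGrowth K f p := by
  refine hg.of_norm_le (fun n => mul_nonneg (hμ0 n) hk)
    (fun n => add_nonneg (mul_nonneg (hμ0 n) hφM) (hν0 n)) (hμ.mul_right k)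
    ((hμ.mul_right (φ M)).add hν) fun n z hz => ?_
  rcases n with _ | n
  · simp only [Function.iterate_zero, id_eq]
    nlinarith [mul_nonneg (mul_nonneg (hμ0 0) hk) (norm_nonneg (z - p)),
      mul_nonneg (hμ0 0) hφM, hν0 0]
  · have h := hf (n + 1) n.succ_pos z hz p hp
    rw [Function.iterate_fixed hfp, Function.iterate_fixed hgp] at h
    nlinarith [mul_le_mul_of_nonneg_left
      (le_add_mul_of_monotoneOn hφ hM hk hφM hφk (norm_nonneg (g^[n + 1] z - p))) (hμ0 (n + 1))]

theorem exists_forall_mem_iterate_growth {K : Set X} {p : X} {S : Set (X → X)} (hS : S.Finite)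
    (h : ∀ f ∈ S, HasSummableIterateGrowth K f p) :
    ∃ β γ : ℕ → ℝ, (∀ n, 0 ≤ β n) ∧ (∀ n, 0 ≤ γ n) ∧ Summable β ∧ Summable γ ∧
      ∀ f ∈ S, ∀ n, ∀ z ∈ K, ‖f^[n] z - p‖ ≤ (1 + β n) * ‖z - p‖ + γ n := by
  choose! β γ hβ0 hγ0 hβ hγ hf using h
  have hmem : ∀ {f}, f ∈ hS.toFinset ↔ f ∈ S := hS.mem_toFinset
  refine ⟨fun n => ∑ f ∈ hS.toFinset, β f n, fun n => ∑ f ∈ hS.toFinset, γ f n,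
    fun n => sum_nonneg fun f hf => hβ0 f (hmem.1 hf) n,
    fun n => sum_nonneg fun f hf => hγ0 f (hmem.1 hf) n,
    summable_sum fun f hf => hβ f (hmem.1 hf), summable_sum fun f hf => hγ f (hmem.1 hf),
    fun f hfS n z hz => (hf f hfS n z hz).trans ?_⟩
  gcongr
  · exact single_le_sum (f := fun g => β g n) (fun g hg => hβ0 g (hmem.1 hg) n) (hmem.2 hfS)
  · exact single_le_sum (f := fun g => γ g n) (fun g hg => hγ0 g (hmem.1 hg) n) (hmem.2 hfS)

end IterateGrowth

section MannScheme

theorem Convex.smul_add_sum_smul_mem {X : Type*} [AddCommGroup X] [Module ℝ X] {K : Set X}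
    (hK : Convex ℝ K) {m : ℕ} {w : Fin (m + 1) → ℝ} (hw0 : ∀ j, 0 ≤ w j) (hw : ∑ j, w j = 1)
    {x₀ : X} {z : Fin m → X} (hx₀ : x₀ ∈ K) (hz : ∀ i, z i ∈ K) :
    w 0 • x₀ + ∑ i, w i.succ • z i ∈ K := by
  have := hK.sum_mem (t := univ) (z := Fin.cons x₀ z) (fun j _ => hw0 j) hw
    fun j _ => by cases j using Fin.cases <;> simp [hx₀, hz]
  simpa [Fin.sum_univ_succ] using this

theorem norm_smul_add_sum_smul_sub_le {X : Type*} [SeminormedAddCommGroup X] [NormedSpace ℝ X]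
    {m : ℕ} {w : Fin (m + 1) → ℝ} (hw0 : ∀ j, 0 ≤ w j) (hw : ∑ j, w j = 1) (x₀ : X)
    {z : Fin m → X} {p : X} {S : ℝ} (hz : ∀ i, ‖z i - p‖ ≤ S) :
    ‖w 0 • x₀ + ∑ i, w i.succ • z i - p‖ ≤ w 0 * ‖x₀ - p‖ + (1 - w 0) * S := by
  have hrest : ∑ i : Fin m, w i.succ = 1 - w 0 := by rw [Fin.sum_univ_succ] at hw; linarith
  have hcenter : w 0 • x₀ + ∑ i, w i.succ • z i - p
      = w 0 • (x₀ - p) + ∑ i, w i.succ • (z i - p) := by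
    simpa [Fin.sum_univ_succ] using sum_smul_sub_eq_sum_smul_sub hw (Fin.cons x₀ z) p
  rw [hcenter, ← hrest]
  refine (norm_add_le _ _).trans (add_le_add (norm_smul_of_nonneg (hw0 0) _).le ?_)
  exact norm_sum_smul_le (fun i _ => hw0 _) fun i _ => hz i

variable {X : Type*} [NormedAddCommGroup X] [NormedSpace ℝ X] {K : Set X} {m : ℕ}
  {T I : Fin m → X → X} {a b : Fin (m + 1) → ℕ → ℝ} {x y : ℕ → X}

theorem Convex.mann_iterates_mem (hK : Convex ℝ K) (hTK : ∀ i, MapsTo (T i) K K)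
    (hIK : ∀ i, MapsTo (I i) K K) (ha0 : ∀ j n, 0 ≤ a j n) (hb0 : ∀ j n, 0 ≤ b j n)
    (hasum : ∀ n, ∑ j, a j n = 1) (hbsum : ∀ n, ∑ j, b j n = 1) (hx0 : x 0 ∈ K)
    (hy : ∀ n, y n = b 0 n • x n + ∑ i, b i.succ n • (I i)^[n] (x n))
    (hx : ∀ n, x (n + 1) = a 0 n • x n + ∑ i, a i.succ n • (T i)^[n] (y n)) (n : ℕ) :
    x n ∈ K ∧ y n ∈ K := by
  have hyK : ∀ n, x n ∈ K → y n ∈ K := fun n hxn => by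
    rw [hy n]
    exact hK.smul_add_sum_smul_mem (fun j => hb0 j n) (hbsum n) hxn
      fun i => (hIK i).iterate n hxn
  suffices x n ∈ K from ⟨this, hyK n this⟩
  induction n with
  | zero => exact hx0
  | succ n ih =>
    rw [hx n]
    exact hK.smul_add_sum_smul_mem (fun j => ha0 j n) (hasum n) ih
      fun i => (hTK i).iterate n (hyK n ih)

theorem tendsto_norm_sub_iterate_of_mann [UniformConvexSpace X] (hK : Convex ℝ K)
    (hTK : ∀ i, MapsTo (T i) K K) (hIK : ∀ i, MapsTo (I i) K K) {p : X}
    (hT : ∀ i, HasSummableIterateGrowth K (T i) p) (hI : ∀ i, HasSummableIterateGrowth K (I i) p)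
    {ahi blo bhi : ℝ} (hahi : ahi < 1) (hblo : 0 < blo) (hbhi : bhi < 1)
    (ha0 : ∀ j n, 0 ≤ a j n) (ha : ∀ n, a 0 n ≤ ahi) (hb : ∀ j n, b j n ∈ Icc blo bhi)
    (hasum : ∀ n, ∑ j, a j n = 1) (hbsum : ∀ n, ∑ j, b j n = 1) (hx0 : x 0 ∈ K)
    (hy : ∀ n, y n = b 0 n • x n + ∑ i, b i.succ n • (I i)^[n] (x n))
    (hx : ∀ n, x (n + 1) = a 0 n • x n + ∑ i, a i.succ n • (T i)^[n] (y n)) (i : Fin m) :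
    Tendsto (fun n => ‖x n - (I i)^[n] (x n)‖) atTop (𝓝 0) := by
  have hb0 : ∀ j n, 0 ≤ b j n := fun j n => hblo.le.trans (hb j n).1
  have hmem := hK.mann_iterates_mem hTK hIK ha0 hb0 hasum hbsum hx0 hy hx
  obtain ⟨β, γ, hβ0, hγ0, hβ, hγ, hgrowth⟩ := exists_forall_mem_iterate_growth
    (K := K) (p := p) ((finite_range T).union (finite_range I))
    (by rintro _ (⟨i, rfl⟩ | ⟨i, rfl⟩) <;> simp only [hT, hI])
  set V : ℕ → Fin (m + 1) → X := fun n => Fin.cons (x n) fun i => (I i)^[n] (x n)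
  have hyV : ∀ n, y n = ∑ j, b j n • V n j := fun n => by simp [hy, Fin.sum_univ_succ, V]
  have hV : ∀ j n, ‖V n j - p‖ ≤ (1 + β n) * ‖x n - p‖ + γ n := by
    intro j n
    cases j using Fin.cases with
    | zero => simp only [V, Fin.cons_zero]; nlinarith [hβ0 n, hγ0 n, norm_nonneg (x n - p)]
    | succ i => simpa [V] using hgrowth _ (.inr ⟨i, rfl⟩) n _ (hmem n).1
  have hy_le : ∀ n, ‖y n - p‖ ≤ (1 + β n) * ‖x n - p‖ + γ n := fun n => by
    rw [hyV, sum_smul_sub_eq_sum_smul_sub (hbsum n)]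
    exact (norm_sum_smul_le (fun j _ => hb0 j n) fun j _ => hV j n).trans_eq
      (by rw [hbsum n, one_mul])
  have hx_le : ∀ n, ‖x (n + 1) - p‖
      ≤ a 0 n * ‖x n - p‖ + (1 - a 0 n) * ((1 + β n) * ‖y n - p‖ + γ n) := fun n => by
    rw [hx n]
    exact norm_smul_add_sum_smul_sub_le (ha0 · n) (hasum n) _
      fun i => hgrowth _ (.inl ⟨i, rfl⟩) n _ (hmem n).2
  obtain ⟨L, hxL, hyL⟩ := exists_tendsto_of_le_convex_step hahi (ha0 0) ha
    (fun n => norm_nonneg _) hβ0 hγ0 hβ hγ hy_le hx_le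
  have hschu := tendsto_norm_sum_smul_sub hblo hbhi hb hbsum
    (by simpa using ((hβ.tendsto_atTop_zero.const_add 1).mul hxL).add hγ.tendsto_atTop_zero)
    hV (by simpa only [← hyV] using hyL)
  simp only [← hyV] at hschu
  have hxy := hschu 0
  have hyI := hschu i.succ
  simp only [V, Fin.cons_zero, Fin.cons_succ] at hxy hyI
  refine squeeze_zero (fun n => norm_nonneg _)
    (fun n => norm_sub_le_norm_sub_add_norm_sub _ (y n) _) ?_
  simpa [norm_sub_rev (x _)] using hxy.add hyI

end MannScheme

theorem stmt8_general
    {X : Type*} [NormedAddCommGroup X] [NormedSpace ℝ X]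
    [UniformConvexSpace X]
    {K : Set X} (hKco : Convex ℝ K)
    {m : ℕ}
    (T I : Fin m → X → X)
    (hTK : ∀ i, Set.MapsTo (T i) K K) (hIK : ∀ i, Set.MapsTo (I i) K K)
    (μ lam tμ tlam : Fin m → ℕ → ℝ)
    (hμ0 : ∀ i n, 0 ≤ μ i n) (hlam0 : ∀ i n, 0 ≤ lam i n)
    (htμ0 : ∀ i n, 0 ≤ tμ i n) (htlam0 : ∀ i n, 0 ≤ tlam i n)
    (hμsum : ∀ i, Summable (μ i)) (hlamsum : ∀ i, Summable (lam i))
    (htμsum : ∀ i, Summable (tμ i)) (htlamsum : ∀ i, Summable (tlam i))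
    (φ ψ : Fin m → ℝ → ℝ)
    (hφmono : ∀ i, StrictMonoOn (φ i) (Set.Ici 0))
    (hφpos : ∀ i t, 0 ≤ t → 0 ≤ φ i t)
    (hψmono : ∀ i, StrictMonoOn (ψ i) (Set.Ici 0))
    (hψpos : ∀ i t, 0 ≤ t → 0 ≤ ψ i t)
    (hI : ∀ i, ∀ n, 1 ≤ n → ∀ x ∈ K, ∀ y ∈ K,
      ‖(I i)^[n] x - (I i)^[n] y‖ ≤ ‖x - y‖ + tμ i n * ψ i ‖x - y‖ + tlam i n)
    (hT : ∀ i, ∀ n, 1 ≤ n → ∀ x ∈ K, ∀ y ∈ K,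
      ‖(T i)^[n] x - (T i)^[n] y‖ ≤
        ‖(I i)^[n] x - (I i)^[n] y‖ + μ i n * φ i ‖(I i)^[n] x - (I i)^[n] y‖ + lam i n)
    (F : Set X)
    (hFdef : ∀ p, p ∈ F ↔ p ∈ K ∧ ∀ i, T i p = p ∧ I i p = p)
    (hFne : F.Nonempty)
    (M Ms N Ns : Fin m → ℝ)
    (hM : ∀ i, 0 < M i) (hMs : ∀ i, 0 < Ms i) (hN : ∀ i, 0 < N i) (hNs : ∀ i, 0 < Ns i)
    (hφbound : ∀ i ξ, M i ≤ ξ → φ i ξ ≤ Ms i * ξ)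
    (hψbound : ∀ i ζ, N i ≤ ζ → ψ i ζ ≤ Ns i * ζ)
    (alo ahi blo bhi : ℝ)
    (halo : 0 < alo) (hahi1 : ahi < 1)
    (hblo : 0 < blo) (hbhi1 : bhi < 1)
    (a b : Fin (m + 1) → ℕ → ℝ)
    (ha : ∀ j n, a j n ∈ Set.Icc alo ahi) (hb : ∀ j n, b j n ∈ Set.Icc blo bhi)
    (hasum : ∀ n, ∑ j, a j n = 1) (hbsum : ∀ n, ∑ j, b j n = 1)
    (x y : ℕ → X) (hx0 : x 0 ∈ K)
    (hy : ∀ n, y n = b 0 n • x n + ∑ i : Fin m, b i.succ n • (I i)^[n] (x n))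
    (hxrec : ∀ n, x (n + 1) = a 0 n • x n + ∑ i : Fin m, a i.succ n • (T i)^[n] (y n))
    : ∀ i, Tendsto (fun n => ‖x n - (I i)^[n] (x n)‖) atTop (nhds 0) := by
  obtain ⟨p, hpF⟩ := hFne
  obtain ⟨hpK, hpfix⟩ := (hFdef p).1 hpF
  have hIg : ∀ i, HasSummableIterateGrowth K (I i) p := fun i =>
    (hasSummableIterateGrowth_id K p).of_total (by simpa using hI i) hpK (hpfix i).2 rfl
      (htμ0 i) (htlam0 i) (htμsum i) (htlamsum i) (hψmono i).monotoneOn (hN i).le (hNs i).le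
      (hψpos i _ (hN i).le) (hψbound i)
  have hTg : ∀ i, HasSummableIterateGrowth K (T i) p := fun i =>
    (hIg i).of_total (hT i) hpK (hpfix i).1 (hpfix i).2 (hμ0 i) (hlam0 i) (hμsum i) (hlamsum i)
      (hφmono i).monotoneOn (hM i).le (hMs i).le (hφpos i _ (hM i).le) (hφbound i)
  exact tendsto_norm_sub_iterate_of_mann hKco hTK hIK hTg hIg hahi1 hblo hbhi1
    (fun j n => halo.le.trans (ha j n).1) (fun n => (ha 0 n).2) hb hasum hbsum hx0 hy hxrec

/-- part of Proposition 3.6: under the bounded-coefficient scheme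
hypotheses with all maps continuous, `lim ‖x n - (I i)ⁿ (x n)‖ = 0` for each `i`. -/
theorem stmt8
    {X : Type*} [NormedAddCommGroup X] [NormedSpace ℝ X] [CompleteSpace X]
    [UniformConvexSpace X]
    {K : Set X} (hKne : K.Nonempty) (hKcl : IsClosed K) (hKco : Convex ℝ K)
    {m : ℕ} (hm : 1 ≤ m)
    (T I : Fin m → X → X)
    (hTK : ∀ i, Set.MapsTo (T i) K K) (hIK : ∀ i, Set.MapsTo (I i) K K)
    (hTcont : ∀ i, ContinuousOn (T i) K) (hIcont : ∀ i, ContinuousOn (I i) K)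
    (μ lam tμ tlam : Fin m → ℕ → ℝ)
    (hμ0 : ∀ i n, 0 ≤ μ i n) (hlam0 : ∀ i n, 0 ≤ lam i n)
    (htμ0 : ∀ i n, 0 ≤ tμ i n) (htlam0 : ∀ i n, 0 ≤ tlam i n)
    (hμlim : ∀ i, Tendsto (μ i) atTop (nhds 0)) (hlamlim : ∀ i, Tendsto (lam i) atTop (nhds 0))
    (htμlim : ∀ i, Tendsto (tμ i) atTop (nhds 0))
    (htlamlim : ∀ i, Tendsto (tlam i) atTop (nhds 0))
    (hμsum : ∀ i, Summable (μ i)) (hlamsum : ∀ i, Summable (lam i))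
    (htμsum : ∀ i, Summable (tμ i)) (htlamsum : ∀ i, Summable (tlam i))
    (φ ψ : Fin m → ℝ → ℝ)
    (hφmono : ∀ i, StrictMonoOn (φ i) (Set.Ici 0))
    (hφcont : ∀ i, ContinuousOn (φ i) (Set.Ici 0))
    (hφ0 : ∀ i, φ i 0 = 0) (hφpos : ∀ i t, 0 ≤ t → 0 ≤ φ i t)
    (hψmono : ∀ i, StrictMonoOn (ψ i) (Set.Ici 0))
    (hψcont : ∀ i, ContinuousOn (ψ i) (Set.Ici 0))
    (hψ0 : ∀ i, ψ i 0 = 0) (hψpos : ∀ i t, 0 ≤ t → 0 ≤ ψ i t)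
    (hI : ∀ i, ∀ n, 1 ≤ n → ∀ x ∈ K, ∀ y ∈ K,
      ‖(I i)^[n] x - (I i)^[n] y‖ ≤ ‖x - y‖ + tμ i n * ψ i ‖x - y‖ + tlam i n)
    (hT : ∀ i, ∀ n, 1 ≤ n → ∀ x ∈ K, ∀ y ∈ K,
      ‖(T i)^[n] x - (T i)^[n] y‖ ≤
        ‖(I i)^[n] x - (I i)^[n] y‖ + μ i n * φ i ‖(I i)^[n] x - (I i)^[n] y‖ + lam i n)
    (F : Set X)
    (hFdef : ∀ p, p ∈ F ↔ p ∈ K ∧ ∀ i, T i p = p ∧ I i p = p)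
    (hFne : F.Nonempty)
    (M Ms N Ns : Fin m → ℝ)
    (hM : ∀ i, 0 < M i) (hMs : ∀ i, 0 < Ms i) (hN : ∀ i, 0 < N i) (hNs : ∀ i, 0 < Ns i)
    (hφbound : ∀ i ξ, M i ≤ ξ → φ i ξ ≤ Ms i * ξ)
    (hψbound : ∀ i ζ, N i ≤ ζ → ψ i ζ ≤ Ns i * ζ)
    (alo ahi blo bhi : ℝ)
    (halo : 0 < alo) (hahi : alo < ahi) (hahi1 : ahi < 1)
    (hblo : 0 < blo) (hbhi : blo < bhi) (hbhi1 : bhi < 1)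
    (a b : Fin (m + 1) → ℕ → ℝ)
    (ha : ∀ j n, a j n ∈ Set.Icc alo ahi) (hb : ∀ j n, b j n ∈ Set.Icc blo bhi)
    (hasum : ∀ n, ∑ j, a j n = 1) (hbsum : ∀ n, ∑ j, b j n = 1)
    (x y : ℕ → X) (hx0 : x 0 ∈ K)
    (hy : ∀ n, y n = b 0 n • x n + ∑ i : Fin m, b i.succ n • (I i)^[n] (x n))
    (hxrec : ∀ n, x (n + 1) = a 0 n • x n + ∑ i : Fin m, a i.succ n • (T i)^[n] (y n))
    : ∀ i, Tendsto (fun n => ‖x n - (I i)^[n] (x n)‖) atTop (nhds 0) :=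
  stmt8_general hKco T I hTK hIK μ lam tμ tlam hμ0 hlam0 htμ0 htlam0 hμsum hlamsum htμsum htlamsum φ
    ψ hφmono hφpos hψmono hψpos hI hT F hFdef hFne M Ms N Ns hM hMs hN hNs hφbound hψbound alo ahi
    blo bhi halo hahi1 hblo hbhi1 a b ha hb hasum hbsum x y hx0 hy hxrec
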